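/- Let k ≥ 1 and m ∈ ℤ with |m| < k. Then W_k M_{z^m} W_k* = I on L²(𝕋) if m = 0, and W_k M_{z^m} W_k* = 0 if 0 < |m| < k. -/

import Mathlib

open MeasureTheory Complex

noncomputable section

instance : Fact ((0:ℝ) < 1) := ⟨one_pos⟩

/-- The unit circle 𝕋, realized additively. -/
abbrev Circ := AddCircle (1:ℝ)
/-- Normalized Haar (Lebesgue) measure on the circle. -/
abbrev μc : Measure Circ := AddCircle.haarAddCircle
/-- The Lebesgue space L²(𝕋). -/
abbrev L2 := Lp ℂ 2 μc

/-- The basis element "z^n" of L²(𝕋). -/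
def e (n : ℤ) : L2 := fourierLp 2 n

/-- The Hardy space H², the closed span of the nonnegative powers of z. -/
def H2 : Submodule ℂ L2 :=
  (Submodule.span ℂ (Set.range fun n : ℕ => e n)).topologicalClosure

/-- The family θ·z^n, n ≥ 0, whose closed span is (the closure of) θH² for inner θ. -/
def thetaSet (θ : Circ → ℂ) : Set L2 :=
  {g | ∃ n : ℕ, ⇑g =ᵐ[μc] fun x => θ x * fourier n x}

/-- The model space K_θ = H² ⊖ θH². -/
def Kmodel (θ : Circ → ℂ) : Submodule ℂ L2 :=
  H2 ⊓ (Submodule.span ℂ (thetaSet θ))ᗮ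

theorem Kmodel_isClosed (θ : Circ → ℂ) : IsClosed (Kmodel θ : Set L2) := by
  have h1 : IsClosed (H2 : Set L2) := Submodule.isClosed_topologicalClosure _
  have h2 : IsClosed ((Submodule.span ℂ (thetaSet θ))ᗮ : Set L2) :=
    Submodule.isClosed_orthogonal _
  have h3 : (Kmodel θ : Set L2) = (H2 : Set L2) ∩ ((Submodule.span ℂ (thetaSet θ))ᗮ : Set L2) := rfl
  rw [h3]; exact h1.inter h2

instance (θ : Circ → ℂ) : CompleteSpace (Kmodel θ) :=
  (Kmodel_isClosed θ).completeSpace_coe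

instance : CompleteSpace H2 :=
  (Submodule.isClosed_topologicalClosure _).completeSpace_coe

/-- The Riesz projection onto H², as an operator on L². -/
def PH2 : L2 →L[ℂ] L2 := H2.subtypeL.comp (Submodule.orthogonalProjectionOnto H2)

/-- The orthogonal projection P_θ onto the model space K_θ, as an operator on L². -/
def Pmod (θ : Circ → ℂ) : L2 →L[ℂ] L2 :=
  (Kmodel θ).subtypeL.comp (Submodule.orthogonalProjectionOnto (Kmodel θ))

/-- The rank-one operator (u ⊗ v) f = ⟨f, v⟩ u (inner product linear in f). -/
def rankOne (u v : L2) : L2 →L[ℂ] L2 :=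
  (ContinuousLinearMap.toSpanSingleton ℂ u).comp (innerSL ℂ v)

/-- θ is (the boundary function of) an inner function: essentially bounded, of modulus
one a.e., with vanishing negative Fourier coefficients. -/
def IsInnerFun (θ : Circ → ℂ) : Prop :=
  MemLp θ ⊤ μc ∧ (∀ᵐ x ∂μc, ‖θ x‖ = 1) ∧
    ∀ n : ℤ, n < 0 → ∫ x, θ x * (starRingEnd ℂ) (fourier n x) ∂μc = 0

/-- The kernel functions k_{0,j}^θ = P_θ(j! z^j). -/
def kker (θ : Circ → ℂ) (j : ℕ) : L2 := Pmod θ ((j.factorial : ℂ) • e j)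

/-- The compressed shift S_θ = P_θ M_z P_θ (as an operator on L², vanishing on K_θᗮ),
built from the multiplication-by-z operator Mz. -/
def Smod (θ : Circ → ℂ) (Mz : L2 →L[ℂ] L2) : L2 →L[ℂ] L2 :=
  (Pmod θ).comp (Mz.comp (Pmod θ))

/-- W is the k-th order slant shift W_k : z^n ↦ z^(n/k) if k ∣ n, else 0. -/
def IsSlantShift (k : ℕ) (W : L2 →L[ℂ] L2) : Prop :=
  ∀ n : ℤ, W (e n) = if (k:ℤ) ∣ n then e (n / k) else 0

/-- Mz is the multiplication by z on L². -/
def IsMz (Mz : L2 →L[ℂ] L2) : Prop :=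
  ∀ f : L2, ⇑(Mz f) =ᵐ[μc] fun x => fourier 1 x * f x

/-- U agrees with the compression U_φ^{α,β} = P_β W_k(φ ·) on K_α^∞ = K_α ∩ H^∞. -/
def UphiRel (W : L2 →L[ℂ] L2) (α β : Circ → ℂ) (φ : Circ → ℂ) (U : L2 →L[ℂ] L2) : Prop :=
  ∀ f : L2, f ∈ Kmodel α → MemLp (⇑f) ⊤ μc →
    ∀ g : L2, (⇑g =ᵐ[μc] fun x => φ x * f x) → U f = Pmod β (W g)

/-- U belongs to 𝒮_k(α,β): it is a bounded extension of some U_φ^{α,β}, φ ∈ L². -/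
def InSk (W : L2 →L[ℂ] L2) (α β : Circ → ℂ) (U : L2 →L[ℂ] L2) : Prop :=
  ∃ φ : Circ → ℂ, MemLp φ 2 μc ∧ UphiRel W α β φ U

/-- Sstar acts as the backward shift on H²: S* f = P(conj z · f). -/
def IsBackwardShift (Sstar : L2 →L[ℂ] L2) : Prop :=
  ∀ f : L2, f ∈ H2 → ∀ g : L2,
    (⇑g =ᵐ[μc] fun x => (starRingEnd ℂ) (fourier 1 x) * f x) → Sstar f = PH2 g

/-- C is the conjugation C_θ f = θ · conj(z f) on L². -/
def IsConjOp (θ : Circ → ℂ) (C : L2 → L2) : Prop :=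
  ∀ f : L2, ⇑(C f) =ᵐ[μc] fun x => θ x * (starRingEnd ℂ) (fourier 1 x * f x)

/-! On the basis, `W_k M_{z^m} W_k*` sends `z^n ↦ z^{kn} ↦ z^{kn+m}`, and `k ∣ kn + m` exactly
when `m = 0` because `|m| < k`; then it returns `z^n`. Continuous linear maps agreeing on the
dense span of the `z^n` are equal. -/

open scoped ENNReal

theorem dvd_add_mul_self_iff_eq_zero_of_abs_lt {k m : ℤ} (hm : |m| < k) (n : ℤ) :
    k ∣ m + k * n ↔ m = 0 := by
  rw [dvd_add_left (dvd_mul_right k n)]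
  exact ⟨fun h => Int.eq_zero_of_abs_lt_dvd h hm, fun h => h ▸ dvd_zero k⟩

namespace AddCircle

variable {T : ℝ} [Fact (0 < T)] {p : ℝ≥0∞} [Fact (1 ≤ p)]

theorem eq_fourierLp_add_of_ae_eq_fourier_mul {m n : ℤ}
    {g : Lp ℂ p (haarAddCircle (T := T))}
    (hg : ⇑g =ᵐ[haarAddCircle] fun x => fourier m x * fourierLp p n x) :
    g = fourierLp p (m + n) := by
  refine Lp.ext ?_
  filter_upwards [hg, coeFn_fourierLp p n, coeFn_fourierLp p (m + n)] with x hgx hn hmn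
  rw [hgx, hn, hmn, fourier_add]

theorem continuousLinearMap_ext_fourierLp {F : Type*} [NormedAddCommGroup F] [NormedSpace ℂ F]
    (hp : p ≠ ∞) {A B : Lp ℂ p (haarAddCircle (T := T)) →L[ℂ] F}
    (h : ∀ n : ℤ, A (fourierLp p n) = B (fourierLp p n)) : A = B :=
  ContinuousLinearMap.ext_on
    (Submodule.dense_iff_topologicalClosure_eq_top.2 (span_fourierLp_closure_eq_top hp))
    (by rintro _ ⟨n, rfl⟩; exact h n)

end AddCircle

theorem slant_mult_slantstar_apply_e {k : ℕ} {m : ℤ} (hm : |m| < (k : ℤ))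
    {W Wstar Mm : L2 →L[ℂ] L2} (hW : IsSlantShift k W)
    (hWs : ∀ n : ℤ, Wstar (e n) = e (k * n))
    (hMm : ∀ f : L2, ⇑(Mm f) =ᵐ[μc] fun x => fourier m x * f x) (n : ℤ) :
    W (Mm (Wstar (e n))) = if m = 0 then e n else 0 := by
  have hk : (k : ℤ) ≠ 0 := (abs_nonneg m |>.trans_lt hm).ne'
  have hMe : Mm (e (k * n)) = e (m + k * n) :=
    AddCircle.eq_fourierLp_add_of_ae_eq_fourier_mul (hMm _)
  rw [hWs, hMe, hW]
  by_cases h0 : m = 0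
  · simp [h0, Int.mul_ediv_cancel_left n hk]
  · rw [if_neg (mt (dvd_add_mul_self_iff_eq_zero_of_abs_lt hm n).1 h0), if_neg h0]

theorem slant_mult_slantstar_general (k : ℕ) (m : ℤ) (hm : |m| < (k : ℤ))
    (W Wstar Mm : L2 →L[ℂ] L2) (hW : IsSlantShift k W)
    (hWs : ∀ n : ℤ, Wstar (e n) = e (k * n))
    (hMm : ∀ f : L2, ⇑(Mm f) =ᵐ[μc] fun x => fourier m x * f x) :
    (m = 0 → W.comp (Mm.comp Wstar) = ContinuousLinearMap.id ℂ L2) ∧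
    (m ≠ 0 → W.comp (Mm.comp Wstar) = 0) := by
  have hcomp : W.comp (Mm.comp Wstar) = if m = 0 then ContinuousLinearMap.id ℂ L2 else 0 :=
    AddCircle.continuousLinearMap_ext_fourierLp (by norm_num) fun n => by
      refine (slant_mult_slantstar_apply_e hm hW hWs hMm n).trans ?_
      split_ifs <;> rfl
  exact ⟨fun h0 => by simp [hcomp, h0], fun h0 => by simp [hcomp, h0]⟩

/-- W_k M_{z^m} W_k* = I if m = 0 and = 0 if 0 < |m| < k. -/
theorem slant_mult_slantstar (k : ℕ) (hk : 1 ≤ k) (m : ℤ) (hm : |m| < (k : ℤ))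
    (W Wstar Mm : L2 →L[ℂ] L2) (hW : IsSlantShift k W)
    (hWs : ∀ n : ℤ, Wstar (e n) = e (k * n))
    (hMm : ∀ f : L2, ⇑(Mm f) =ᵐ[μc] fun x => fourier m x * f x) :
    (m = 0 → W.comp (Mm.comp Wstar) = ContinuousLinearMap.id ℂ L2) ∧
    (m ≠ 0 → W.comp (Mm.comp Wstar) = 0) :=
  slant_mult_slantstar_general k m hm W Wstar Mm hW hWs hMm
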